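/- Let P be a digital net in base 2 with 2^m points whose matrix C_{1:s,1} has full row rank. Then the maximal gain coefficient is Γ = 2^{t*_{1:s}+s−1}, where t*_{1:s} = m+1 − min{|k| : k ∈ ℕ^s, C_{1:s,k} not full row rank}. -/

import Mathlib

open Finset

noncomputable section

/-- the `i`-th `b`-adic digit of a natural number `k`. -/
def ndigit (b k i : ℕ) : ℕ := k / b ^ i % b

/-- the `(i+1)`-st `b`-adic digit of a real number `x ∈ [0,1)`
(the unique expansion with infinitely many digits `≠ b-1`). -/
def rdigit (b : ℕ) (x : ℝ) (i : ℕ) : ℕ := (⌊(b : ℝ) ^ (i + 1) * x⌋).toNat % b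

/-- the primitive `b`-th root of unity `ω_b = exp(2πi/b)`. -/
def omg (b : ℕ) : ℂ := Complex.exp (2 * Real.pi * Complex.I / b)

/-- embed a digit (element of `Z_b`) into the finite field `F` via the bijection `φ`. -/
def toF {F : Type} [Field F] [Fintype F] (φ : Fin (Fintype.card F) ≃ F) (a : ℕ) : F :=
  φ ⟨a % Fintype.card F, Nat.mod_lt a Fintype.card_pos⟩

/-- map a field element back to a digit in `Z_b` via `φ⁻¹`. -/
def fromF {F : Type} [Field F] [Fintype F] (φ : Fin (Fintype.card F) ≃ F) (a : F) : ℕ :=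
  (φ.symm a : ℕ)

/-- the `k`-th `b`-adic Walsh function, `b = |F|`,
`wal_k(x) = ω_b^{φ⁻¹(φ(κ₀)φ(ξ₁)) + φ⁻¹(φ(κ₁)φ(ξ₂)) + ⋯}`. -/
def wal {F : Type} [Field F] [Fintype F] (φ : Fin (Fintype.card F) ≃ F) (k : ℕ) (x : ℝ) : ℂ :=
  omg (Fintype.card F) ^
    ∑ i ∈ Finset.range k,
      fromF φ (toF φ (ndigit (Fintype.card F) k i) * toF φ (rdigit (Fintype.card F) x i))

/-- the multivariate `b`-adic Walsh function `wal_k(x) = ∏_j wal_{k_j}(x_j)`. -/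
def walv {F : Type} [Field F] [Fintype F] {s : ℕ} (φ : Fin (Fintype.card F) ≃ F)
    (k : Fin s → ℕ) (x : Fin s → ℝ) : ℂ :=
  ∏ j, wal φ (k j) (x j)

/-- the `j`-th coordinate of the `h`-th point of the digital net with generating
matrices `C_1,…,C_s` (with `n` rows, `m` columns, rows of index `≥ n` unused). -/
def dnet {F : Type} [Field F] [Fintype F] {s m : ℕ} (φ : Fin (Fintype.card F) ≃ F)
    (C : Fin s → ℕ → Fin m → F) (n : ℕ) (h : ℕ) (j : Fin s) : ℝ :=
  ∑ i ∈ Finset.range n,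
    (fromF φ (∑ c, C j i c * toF φ (ndigit (Fintype.card F) h (c : ℕ))) : ℝ) /
      (Fintype.card F : ℝ) ^ (i + 1)

/-- membership in the dual net `P^⊥`:
`C_1^⊤ ν_n(k_1) + ⋯ + C_s^⊤ ν_n(k_s) = 0 ∈ F^m`. -/
def inDual {F : Type} [Field F] [Fintype F] {s m : ℕ} (φ : Fin (Fintype.card F) ≃ F)
    (C : Fin s → ℕ → Fin m → F) (n : ℕ) (k : Fin s → ℕ) : Prop :=
  ∀ c : Fin m,
    ∑ j, ∑ i ∈ Finset.range n, C j i c * toF φ (ndigit (Fintype.card F) (k j) i) = 0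

/-- `V(u,k) = {ℓ ∈ ℕ₀^s : ℓ_j < b^{k_j} if j ∈ u, ℓ_j = 0 otherwise}`. -/
def Vset (b : ℕ) {s : ℕ} (u : Finset (Fin s)) (k : Fin s → ℕ) : Finset (Fin s → ℕ) :=
  Fintype.piFinset fun j => Finset.range (if j ∈ u then b ^ k j else 1)

/-- `A(u,l) = {ℓ ∈ ℕ₀^s : b^{l_j-1} ≤ ℓ_j < b^{l_j} if j ∈ u, ℓ_j = 0 otherwise}`. -/
def Aset (b : ℕ) {s : ℕ} (u : Finset (Fin s)) (l : Fin s → ℕ) : Finset (Fin s → ℕ) :=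
  (Vset b u l).filter fun ℓ => ∀ j ∈ u, b ^ (l j - 1) ≤ ℓ j

/-- `k + 1_v`: add one to the components in `v`. -/
def plusOne {s : ℕ} (k : Fin s → ℕ) (v : Finset (Fin s)) : Fin s → ℕ :=
  fun j => if j ∈ v then k j + 1 else k j

/-- the gain coefficient `Γ_{u,k}` of an `N`-element point set in base `b`. -/
def gain {s : ℕ} (b N : ℕ) (x : Fin N → Fin s → ℝ) (u : Finset (Fin s))
    (k : Fin s → ℕ) : ℝ :=
  (1 / N) * ∑ i, ∑ i', ∏ j ∈ u,
    ((b * (if ⌊(b : ℝ) ^ (k j + 1) * x i j⌋ = ⌊(b : ℝ) ^ (k j + 1) * x i' j⌋ then (1:ℝ) else 0) -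
        (if ⌊(b : ℝ) ^ (k j) * x i j⌋ = ⌊(b : ℝ) ^ (k j) * x i' j⌋ then (1:ℝ) else 0)) /
      (b - 1))

/-- `C_{u,k}`: the matrix stacking the first `k_j` rows of `C_j` for `j ∈ u`
(a generating matrix `C_j` having `n` rows). -/
def Cuk {F : Type} [Field F] [Fintype F] {s m : ℕ} (C : Fin s → ℕ → Fin m → F) (n : ℕ)
    (u : Finset (Fin s)) (k : Fin s → ℕ) :
    Matrix ((j : Fin s) × Fin (min (if j ∈ u then k j else 0) n)) (Fin m) F :=
  fun p c => C p.1 (p.2 : ℕ) c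

/-- `C` generates a digital `(t,m,s)`-net in base `b = |F|`:
`C_{u,k}` has full row rank whenever `|k| ≤ m - t`. -/
def IsDigitalTNet {F : Type} [Field F] [Fintype F] {s m : ℕ}
    (C : Fin s → ℕ → Fin m → F) (n : ℕ) (t : ℕ) : Prop :=
  ∀ u : Finset (Fin s), ∀ k : Fin s → ℕ,
    (∑ j ∈ u, k j) + t ≤ m → (Cuk C n u k).rank = ∑ j ∈ u, k j

/-- the upper bound `B(u,k) = b^{m - rank(C_{u,k})} (b-1)^{rank(C_{u,k}) - rank(C_{u,k+1_u})}`. -/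
def Bcoef {F : Type} [Field F] [Fintype F] {s m : ℕ} (C : Fin s → ℕ → Fin m → F) (n : ℕ)
    (u : Finset (Fin s)) (k : Fin s → ℕ) : ℝ :=
  (Fintype.card F : ℝ) ^ ((m : ℤ) - ((Cuk C n u k).rank : ℤ)) *
    ((Fintype.card F : ℝ) - 1) ^
      (((Cuk C n u k).rank : ℤ) - ((Cuk C n u (plusOne k u)).rank : ℤ))

/-- `t*_u = m + 1 - min{|k| : k ∈ ℕ^{|u|}, C_{u,k} not full row rank}`. -/
def tstar {F : Type} [Field F] [Fintype F] {s m : ℕ} (C : Fin s → ℕ → Fin m → F) (n : ℕ)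
    (u : Finset (Fin s)) : ℤ :=
  (m : ℤ) + 1 -
    (sInf {r : ℕ | ∃ k : Fin s → ℕ, (∀ j ∈ u, 1 ≤ k j) ∧
      (Cuk C n u k).rank ≠ ∑ j ∈ u, k j ∧ r = ∑ j ∈ u, k j} : ℕ)

end

/-!
In base 2 the gain coefficient is a character sum. Two points of the net agree in their first
`K` digits of coordinate `j` iff their digit difference `z ∈ 𝔽₂^m` is orthogonal to the first
`K` rows of `C_j`, so each factor `2·[agree to k_j + 1] - [agree to k_j]` of `Γ_{u,k}` equals
`[first k_j rows ⊥ z]·(-1)^{e_j·z}`, where `e_j` is row `k_j` of `C_j` (zero if `k_j ≥ n`).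
Summing over `z` gives `Γ_{u,k} = 2^{m - rank C_{u,k}}` when `e = ∑_{j∈u} e_j` lies in the row
space of `C_{u,k}`, and `Γ_{u,k} = 0` otherwise.

It remains to compare `rank C_{u,k} + s` with `μ = min{|k| : k ≥ 1, C_{1:s,k} not of full rank}`.
If `e` is in the row space and `rank C_{u,k} < m`, then the row prefix of `C_{u,k}`, or else that
prefix extended by the rows `e_j`, is linearly dependent; a minimal dependent prefix below it,
padded with one row in each empty coordinate, shows `μ ≤ rank C_{u,k} + s`. Conversely, take `k`
attaining `μ`. If its truncation to `n` rows is still dependent, a minimal dependent prefix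
`κ ≤ k` has, over `𝔽₂`, coefficient `1` on each of its top rows in any dependency, so
`u = {κ_j > 0}` and `k' = κ - 1` give a witness with `rank C_{u,k'} + s ≤ μ`; otherwise some
`k_j > n ≥ m`, and `k' = (n, …, n)` works.
-/

open Matrix Submodule

lemma Int.mul_add_eq_mul_add_iff {P c c' r r' : ℤ} (hr : 0 ≤ r) (hrP : r < P) (hr' : 0 ≤ r')
    (hrP' : r' < P) : P * c + r = P * c' + r' ↔ c = c' ∧ r = r' := by
  refine ⟨fun h => ?_, fun ⟨hc, hr⟩ => by rw [hc, hr]⟩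
  have hc : c = c' := by
    rcases lt_trichotomy c c' with hlt | heq | hgt
    · nlinarith
    · exact heq
    · nlinarith
  exact ⟨hc, by rw [hc] at h; linarith⟩

noncomputable def digitFrac (b n : ℕ) (a : ℕ → ℕ) : ℝ :=
  ∑ i ∈ range n, (a i : ℝ) / (b : ℝ) ^ (i + 1)

section DigitFrac
variable {b : ℕ} {a a' : ℕ → ℕ}

lemma digitFrac_succ (n : ℕ) (a : ℕ → ℕ) :
    digitFrac b (n + 1) a = (a 0 + digitFrac b n (fun i => a (i + 1))) / b := by
  simp only [digitFrac, sum_range_succ', add_div, sum_div, pow_succ, pow_zero, one_mul,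
    div_div, add_comm]

lemma digitFrac_nonneg (n : ℕ) (a : ℕ → ℕ) : 0 ≤ digitFrac b n a :=
  sum_nonneg fun _ _ => by positivity

lemma digitFrac_lt_one (hb : 0 < b) (ha : ∀ i, a i < b) (n : ℕ) : digitFrac b n a < 1 := by
  induction n generalizing a with
  | zero => simp [digitFrac]
  | succ n ih =>
    rw [digitFrac_succ, div_lt_one (by positivity)]
    have : (a 0 : ℝ) + 1 ≤ b := by exact_mod_cast ha 0
    linarith [ih fun i => ha (i + 1)]

lemma floor_pow_mul_digitFrac_mem_Ico (hb : 0 < b) (ha : ∀ i, a i < b) (K n : ℕ) :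
    ⌊(b : ℝ) ^ K * digitFrac b n a⌋ ∈ Set.Ico 0 ((b : ℤ) ^ K) := by
  constructor
  · exact Int.floor_nonneg.2 (mul_nonneg (by positivity) (digitFrac_nonneg n a))
  · rw [Int.floor_lt]
    push_cast
    exact mul_lt_of_lt_one_right (by positivity) (digitFrac_lt_one hb ha n)

lemma floor_pow_succ_mul_digitFrac_succ (hb : 0 < b) (K n : ℕ) (a : ℕ → ℕ) :
    ⌊(b : ℝ) ^ (K + 1) * digitFrac b (n + 1) a⌋
      = (b : ℤ) ^ K * a 0 + ⌊(b : ℝ) ^ K * digitFrac b n (fun i => a (i + 1))⌋ := by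
  rw [← Int.floor_intCast_add, digitFrac_succ, pow_succ]
  congr 1
  push_cast
  field_simp

theorem floor_pow_mul_digitFrac_eq_iff (hb : 0 < b) (ha : ∀ i, a i < b) (ha' : ∀ i, a' i < b)
    (K n : ℕ) :
    ⌊(b : ℝ) ^ K * digitFrac b n a⌋ = ⌊(b : ℝ) ^ K * digitFrac b n a'⌋ ↔
      ∀ i < min K n, a i = a' i := by
  induction K generalizing n a a' with
  | zero =>
    simp [Int.floor_eq_zero_iff.2 ⟨digitFrac_nonneg n a, digitFrac_lt_one hb ha n⟩,
      Int.floor_eq_zero_iff.2 ⟨digitFrac_nonneg n a', digitFrac_lt_one hb ha' n⟩]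
  | succ K ih =>
    cases n with
    | zero => simp [digitFrac]
    | succ n =>
      obtain ⟨h0, h1⟩ := floor_pow_mul_digitFrac_mem_Ico hb (fun i => ha (i + 1)) K n
      obtain ⟨h0', h1'⟩ := floor_pow_mul_digitFrac_mem_Ico hb (fun i => ha' (i + 1)) K n
      rw [floor_pow_succ_mul_digitFrac_succ hb, floor_pow_succ_mul_digitFrac_succ hb,
        Int.mul_add_eq_mul_add_iff h0 h1 h0' h1', Nat.cast_inj, ih (fun i => ha _) (fun i => ha' _),
        Nat.add_min_add_right, Nat.forall_lt_succ_left]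

end DigitFrac

section DigitalNet
variable {F : Type} [Field F] [Fintype F] {s m : ℕ}

def digitEquiv (φ : Fin (Fintype.card F) ≃ F) (m : ℕ) : Fin (Fintype.card F ^ m) ≃ (Fin m → F) :=
  finFunctionFinEquiv.symm.trans (Equiv.piCongrRight fun _ => φ)

lemma digitEquiv_apply (φ : Fin (Fintype.card F) ≃ F) (h : Fin (Fintype.card F ^ m)) (c : Fin m) :
    digitEquiv φ m h c = toF φ (ndigit (Fintype.card F) h c) := by
  simp only [digitEquiv, Equiv.trans_apply, Equiv.piCongrRight_apply, toF, ndigit]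
  congr 1
  ext
  simp [finFunctionFinEquiv_symm_apply_val]

lemma dnet_eq_digitFrac (φ : Fin (Fintype.card F) ≃ F) (C : Fin s → ℕ → Fin m → F) (n : ℕ)
    (h : Fin (Fintype.card F ^ m)) (j : Fin s) :
    dnet φ C n h j
      = digitFrac (Fintype.card F) n (fun i => fromF φ (C j i ⬝ᵥ digitEquiv φ m h)) := by
  simp [dnet, digitFrac, dotProduct, digitEquiv_apply]

lemma fromF_lt_card (φ : Fin (Fintype.card F) ≃ F) (x : F) : fromF φ x < Fintype.card F :=
  (φ.symm x).isLt

theorem floor_pow_mul_dnet_eq_iff (φ : Fin (Fintype.card F) ≃ F) (C : Fin s → ℕ → Fin m → F)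
    (n : ℕ) (h h' : Fin (Fintype.card F ^ m)) (j : Fin s) (K : ℕ) :
    ⌊(Fintype.card F : ℝ) ^ K * dnet φ C n h j⌋ = ⌊(Fintype.card F : ℝ) ^ K * dnet φ C n h' j⌋ ↔
      ∀ i < min K n, C j i ⬝ᵥ (digitEquiv φ m h - digitEquiv φ m h') = 0 := by
  rw [dnet_eq_digitFrac, dnet_eq_digitFrac,
    floor_pow_mul_digitFrac_eq_iff Fintype.card_pos (fun _ => fromF_lt_card φ _)
      (fun _ => fromF_lt_card φ _)]
  simp only [fromF, Fin.val_inj, φ.symm.injective.eq_iff, dotProduct_sub, sub_eq_zero]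

end DigitalNet

section CharTwo
variable {F : Type*} [Field F] [Fintype F]

lemma eq_zero_or_eq_one_of_card_eq_two (h2 : Fintype.card F = 2) (a : F) : a = 0 ∨ a = 1 := by
  classical
  have huniv : ({0, 1} : Finset F) = univ :=
    eq_univ_of_card _ (by rw [card_pair zero_ne_one, h2])
  have ha : a ∈ ({0, 1} : Finset F) := by rw [huniv]; exact mem_univ a
  simpa using ha

lemma one_add_one_eq_zero_of_card_eq_two (h2 : Fintype.card F = 2) : (1 + 1 : F) = 0 := by
  have := FiniteField.cast_card_eq_zero F
  rw [h2, Nat.cast_ofNat] at this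
  rw [one_add_one_eq_two, this]

open Classical in
noncomputable def signChar (h2 : Fintype.card F = 2) : AddChar F ℝ where
  toFun a := if a = 0 then 1 else -1
  map_zero_eq_one' := if_pos rfl
  map_add_eq_mul' a b := by
    rcases eq_zero_or_eq_one_of_card_eq_two h2 a with rfl | rfl <;>
      rcases eq_zero_or_eq_one_of_card_eq_two h2 b with rfl | rfl <;>
      simp [one_add_one_eq_zero_of_card_eq_two h2]

open Classical in
lemma signChar_apply (h2 : Fintype.card F = 2) (a : F) :
    signChar h2 a = if a = 0 then 1 else -1 := rfl

lemma AddChar.map_sum_eq_prod {A M ι : Type*} [AddCommMonoid A] [CommMonoid M] (ψ : AddChar A M)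
    (s : Finset ι) (f : ι → A) : ψ (∑ i ∈ s, f i) = ∏ i ∈ s, ψ (f i) :=
  map_prod ψ.toMonoidHom (fun i => Multiplicative.ofAdd (f i)) s

end CharTwo

section KernelSum
variable {F ι ι' : Type*} [Field F] [Fintype ι'] [DecidableEq ι']

theorem mem_span_range_iff_forall_mulVec_eq_zero (M : Matrix ι ι' F) (E : ι' → F) :
    E ∈ span F (Set.range M.row) ↔ ∀ z, M *ᵥ z = 0 → E ⬝ᵥ z = 0 := by
  constructor
  · intro hE z hz
    have hle : span F (Set.range M.row) ≤ LinearMap.ker (dotProductEquiv F ι' z) :=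
      span_le.2 <| Set.range_subset_iff.2 fun i => by
        change z ⬝ᵥ M i = 0
        rw [dotProduct_comm]
        exact congrFun hz i
    simpa [dotProduct_comm] using hle hE
  · intro h
    by_contra hE
    obtain ⟨f, hfE, hf⟩ := exists_dual_map_eq_bot_of_notMem hE inferInstance
    set z := (dotProductEquiv F ι').symm f
    have hfz : ∀ v, f v = z ⬝ᵥ v := fun v => by
      rw [← dotProductEquiv_apply_apply, LinearEquiv.apply_symm_apply]
    apply hfE
    rw [hfz, dotProduct_comm]
    refine h z (funext fun i => ?_)
    rw [mulVec, dotProduct_comm, ← hfz]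
    have hi : f (M i) ∈ (span F (Set.range M.row)).map f :=
      Submodule.mem_map_of_mem (subset_span ⟨i, rfl⟩)
    simpa [hf] using hi

lemma natCard_mulVec_eq_zero [Fintype F] (M : Matrix ι ι' F) :
    Nat.card {z // M *ᵥ z = 0} = Fintype.card F ^ (Fintype.card ι' - M.rank) := by
  classical
  have hker : {z // M *ᵥ z = 0} ≃ LinearMap.ker M.mulVecLin :=
    Equiv.subtypeEquivRight fun z => by rw [LinearMap.mem_ker, mulVecLin_apply]
  have hrn := LinearMap.finrank_range_add_finrank_ker M.mulVecLin
  rw [Module.finrank_fintype_fun_eq_card] at hrn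
  rw [Nat.card_congr hker, Nat.card_eq_fintype_card, Module.card_eq_pow_finrank (K := F),
    Matrix.rank]
  congr 1
  omega

open Classical in
theorem sum_ite_mulVec_eq_zero_signChar [Fintype ι] [Fintype F] (h2 : Fintype.card F = 2)
    (M : Matrix ι ι' F) (E : ι' → F) :
    ∑ z : ι' → F, (if M *ᵥ z = 0 then signChar h2 (E ⬝ᵥ z) else 0)
      = if E ∈ span F (Set.range M.row) then 2 ^ (Fintype.card ι' - M.rank) else 0 := by
  rw [mem_span_range_iff_forall_mulVec_eq_zero]
  split_ifs with hE
  · have hcard := natCard_mulVec_eq_zero M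
    rw [Nat.card_eq_fintype_card, Fintype.card_subtype, h2] at hcard
    rw [← Nat.cast_ofNat, ← Nat.cast_pow, ← hcard, ← sum_boole]
    refine sum_congr rfl fun z _ => ?_
    split_ifs with hz
    · rw [hE z hz, AddChar.map_zero_eq_one]
    · rfl
  · push Not at hE
    obtain ⟨z₀, hz₀, hE₀⟩ := hE
    have hshift := Fintype.sum_equiv (Equiv.addRight z₀)
      (fun z => -(if M *ᵥ z = 0 then signChar h2 (E ⬝ᵥ z) else 0))
      (fun z => if M *ᵥ z = 0 then signChar h2 (E ⬝ᵥ z) else 0) fun z => by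
        simp only [Equiv.coe_addRight, mulVec_add, hz₀, add_zero, dotProduct_add,
          AddChar.map_add_eq_mul, signChar_apply h2 (E ⬝ᵥ z₀), if_neg hE₀]
        split_ifs <;> ring
    rw [sum_neg_distrib] at hshift
    linarith

end KernelSum

lemma sum_sum_sub_equiv {ι G : Type*} [Fintype ι] [AddCommGroup G] [Fintype G] (e : ι ≃ G)
    (f : G → ℝ) : ∑ h, ∑ h', f (e h - e h') = Fintype.card G * ∑ z, f z := by
  rw [Fintype.sum_equiv e _ (fun x => ∑ y, f (x - y))
    fun h => Fintype.sum_equiv e _ _ fun _ => rfl]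
  simp only [fun x => Fintype.sum_equiv (Equiv.subLeft x) (fun y => f (x - y)) f fun _ => rfl,
    sum_const, card_univ, nsmul_eq_mul]

section Gain
variable {F : Type} [Field F] [Fintype F] {s m : ℕ}

def nextRowSum (C : Fin s → ℕ → Fin m → F) (n : ℕ) (u : Finset (Fin s)) (k : Fin s → ℕ) :
    Fin m → F :=
  ∑ j ∈ u, if k j < n then C j (k j) else 0

open Classical in
lemma two_mul_ite_sub_ite_eq (h2 : Fintype.card F = 2) (c : ℕ → Fin m → F) (n K : ℕ)
    (z : Fin m → F) :
    (2 * (if ∀ i < min (K + 1) n, c i ⬝ᵥ z = 0 then 1 else 0)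
        - (if ∀ i < min K n, c i ⬝ᵥ z = 0 then 1 else 0) : ℝ)
      = (if ∀ i < min K n, c i ⬝ᵥ z = 0 then 1 else 0)
          * signChar h2 ((if K < n then c K else 0) ⬝ᵥ z) := by
  have hsucc : (∀ i < min (K + 1) n, c i ⬝ᵥ z = 0) ↔
      (∀ i < min K n, c i ⬝ᵥ z = 0) ∧ (K < n → c K ⬝ᵥ z = 0) := by
    constructor
    · exact fun h => ⟨fun i hi => h i (by omega), fun hK => h K (by omega)⟩
    · rintro ⟨h, hK⟩ i hi
      by_cases hiK : i < min K n
      · exact h i hiK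
      · exact (show i = K by omega) ▸ hK (by omega)
  rw [signChar_apply]
  simp only [hsucc]
  by_cases hK : K < n <;> split_ifs <;> simp_all <;> norm_num

lemma Cuk_mulVec_eq_zero_iff (C : Fin s → ℕ → Fin m → F) (n : ℕ) (u : Finset (Fin s))
    (k : Fin s → ℕ) (z : Fin m → F) :
    Cuk C n u k *ᵥ z = 0 ↔ ∀ j ∈ u, ∀ i < min (k j) n, C j i ⬝ᵥ z = 0 := by
  constructor
  · intro h j hj i hi
    exact congrFun h ⟨j, ⟨i, by simpa [hj] using hi⟩⟩
  · intro h
    funext ⟨j, i, hi⟩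
    by_cases hj : j ∈ u
    · exact h j hj i (by simpa [hj] using hi)
    · simp [hj] at hi

open Classical in
theorem gain_dnet (h2 : Fintype.card F = 2) (φ : Fin (Fintype.card F) ≃ F)
    (C : Fin s → ℕ → Fin m → F) (n : ℕ) (u : Finset (Fin s)) (k : Fin s → ℕ) :
    gain (Fintype.card F) (Fintype.card F ^ m) (fun i j => dnet φ C n i j) u k
      = if nextRowSum C n u k ∈ span F (Set.range (Cuk C n u k).row)
        then 2 ^ (m - (Cuk C n u k).rank) else 0 := by
  have hb : (Fintype.card F : ℝ) = 2 := by rw [h2, Nat.cast_ofNat]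
  set f : (Fin m → F) → ℝ :=
    fun z => if Cuk C n u k *ᵥ z = 0 then signChar h2 (nextRowSum C n u k ⬝ᵥ z) else 0 with hf
  have hterm : ∀ h h' : Fin (Fintype.card F ^ m),
      ∏ j ∈ u, (((Fintype.card F : ℝ) *
          (if ⌊(Fintype.card F : ℝ) ^ (k j + 1) * dnet φ C n h j⌋ =
            ⌊(Fintype.card F : ℝ) ^ (k j + 1) * dnet φ C n h' j⌋ then (1 : ℝ) else 0) -
          (if ⌊(Fintype.card F : ℝ) ^ (k j) * dnet φ C n h j⌋ =
            ⌊(Fintype.card F : ℝ) ^ (k j) * dnet φ C n h' j⌋ then (1 : ℝ) else 0)) /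
        ((Fintype.card F : ℝ) - 1))
        = f (digitEquiv φ m h - digitEquiv φ m h') := by
    intro h h'
    simp only [floor_pow_mul_dnet_eq_iff]
    simp only [hb, two_mul_ite_sub_ite_eq h2, show (2 : ℝ) - 1 = 1 by norm_num, div_one]
    simp only [prod_mul_distrib, prod_boole, ← AddChar.map_sum_eq_prod, ← sum_dotProduct, hf,
      Cuk_mulVec_eq_zero_iff, nextRowSum]
    split_ifs <;> simp
  unfold gain
  simp only [hterm]
  rw [sum_sum_sub_equiv, hf]
  beta_reduce
  rw [sum_ite_mulVec_eq_zero_signChar, Fintype.card_fin, Fintype.card_fun, Fintype.card_fin]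
  split_ifs
  · field_simp
  · simp

end Gain

section RowPrefix
variable {F : Type} [Field F] {s m : ℕ}

def rowFam (C : Fin s → ℕ → Fin m → F) (p : Σ _ : Fin s, ℕ) : Fin m → F := C p.1 p.2

def prefixIdx (κ : Fin s → ℕ) : Finset (Σ _ : Fin s, ℕ) := univ.sigma fun j => range (κ j)

@[simp] lemma mem_prefixIdx {κ : Fin s → ℕ} {p : Σ _ : Fin s, ℕ} :
    p ∈ prefixIdx κ ↔ p.2 < κ p.1 := by
  simp [prefixIdx]

lemma card_prefixIdx (κ : Fin s → ℕ) : #(prefixIdx κ) = ∑ j, κ j := by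
  simp [prefixIdx]

lemma prefixIdx_mono {κ κ' : Fin s → ℕ} (h : κ ≤ κ') : prefixIdx κ ⊆ prefixIdx κ' :=
  fun p hp => mem_prefixIdx.2 ((mem_prefixIdx.1 hp).trans_le (h p.1))

lemma sum_prefixIdx_of_le_of_le_add_one {M : Type*} [AddCommMonoid M] {κ κ' : Fin s → ℕ}
    (h₁ : κ' ≤ κ) (h₂ : ∀ j, κ j ≤ κ' j + 1) (f : (Σ _ : Fin s, ℕ) → M) :
    ∑ p ∈ prefixIdx κ, f p
      = ∑ p ∈ prefixIdx κ', f p + ∑ j with κ' j < κ j, f ⟨j, κ' j⟩ := by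
  simp only [prefixIdx, sum_sigma, sum_filter, ← sum_add_distrib]
  refine sum_congr rfl fun j _ => ?_
  rcases (show κ j = κ' j ∨ κ j = κ' j + 1 by have h₁j : κ' j ≤ κ j := h₁ j; have := h₂ j; omega)
    with h | h <;> simp [h, sum_range_succ]

lemma sum_prefixIdx_eq_sum_update_pred_add {M : Type*} [AddCommMonoid M] {κ : Fin s → ℕ}
    {j : Fin s} (hj : 0 < κ j) (f : (Σ _ : Fin s, ℕ) → M) :
    ∑ p ∈ prefixIdx κ, f p
      = ∑ p ∈ prefixIdx (Function.update κ j (κ j - 1)), f p + f ⟨j, κ j - 1⟩ := by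
  classical
  have hupd : ∀ i, Function.update κ j (κ j - 1) i = if i = j then κ j - 1 else κ i :=
    fun i => Function.update_apply ..
  have hfilter : (univ.filter fun i => Function.update κ j (κ j - 1) i < κ i) = {j} := by
    ext i
    by_cases hi : i = j
    · subst hi; simp; omega
    · simp [hi]
  rw [sum_prefixIdx_of_le_of_le_add_one (update_le_iff.2 ⟨Nat.sub_le _ _, fun _ _ => le_rfl⟩)
    (fun i => by rw [hupd]; split_ifs with hi <;> [(subst hi; omega); omega]), hfilter,
    sum_singleton, Function.update_self]

lemma mem_prefixIdx_update_pred {κ : Fin s → ℕ} {j : Fin s} {p : Σ _ : Fin s, ℕ}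
    (hp : p ∈ prefixIdx κ) (hne : p ≠ ⟨j, κ j - 1⟩) :
    p ∈ prefixIdx (Function.update κ j (κ j - 1)) := by
  classical
  obtain ⟨i, r⟩ := p
  simp only [mem_prefixIdx] at hp ⊢
  by_cases hi : i = j
  · subst hi
    rw [Function.update_self]
    exact lt_of_le_of_ne (Nat.le_sub_one_of_lt hp) fun hr => hne (by rw [hr])
  · rwa [Function.update_of_ne hi]

lemma nonempty_prefixIdx_of_not_linearIndepOn {C : Fin s → ℕ → Fin m → F} {κ : Fin s → ℕ}
    (h : ¬LinearIndepOn F (rowFam C) ↑(prefixIdx κ)) : ∃ j, 0 < κ j := by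
  by_contra! h0
  have : prefixIdx κ = ∅ := eq_empty_of_forall_notMem fun p hp => by
    have := h0 p.1; simp at hp; omega
  exact h (by simp [this])

noncomputable def prefixRank (C : Fin s → ℕ → Fin m → F) (κ : Fin s → ℕ) : ℕ :=
  (rowFam C '' ↑(prefixIdx κ)).finrank F

lemma prefixRank_mono (C : Fin s → ℕ → Fin m → F) {κ κ' : Fin s → ℕ} (h : κ ≤ κ') :
    prefixRank C κ ≤ prefixRank C κ' :=
  Submodule.finrank_mono (span_mono (Set.image_mono (coe_subset.2 (prefixIdx_mono h))))

lemma prefixRank_le_sum (C : Fin s → ℕ → Fin m → F) (κ : Fin s → ℕ) :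
    prefixRank C κ ≤ ∑ j, κ j := by
  classical
  rw [prefixRank, ← coe_image, ← card_prefixIdx]
  exact (finrank_span_finset_le_card _).trans card_image_le

lemma linearIndepOn_prefixIdx_iff (C : Fin s → ℕ → Fin m → F) (κ : Fin s → ℕ) :
    LinearIndepOn F (rowFam C) ↑(prefixIdx κ) ↔ prefixRank C κ = ∑ j, κ j := by
  rw [LinearIndepOn, linearIndependent_iff_card_eq_finrank_span, prefixRank, Set.image_eq_range,
    ← card_prefixIdx]
  simp only [coe_sort_coe, Fintype.card_coe, eq_comm]

lemma range_Cuk_row [Fintype F] (C : Fin s → ℕ → Fin m → F) (n : ℕ) (u : Finset (Fin s))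
    (k : Fin s → ℕ) :
    Set.range (Cuk C n u k).row
      = rowFam C '' ↑(prefixIdx fun j => min (if j ∈ u then k j else 0) n) := by
  ext v
  constructor
  · rintro ⟨⟨j, i⟩, rfl⟩
    exact ⟨⟨j, i⟩, mem_prefixIdx.2 i.isLt, rfl⟩
  · rintro ⟨⟨j, i⟩, hi, rfl⟩
    exact ⟨⟨j, ⟨i, mem_prefixIdx.1 hi⟩⟩, rfl⟩

lemma rank_Cuk [Fintype F] (C : Fin s → ℕ → Fin m → F) (n : ℕ) (u : Finset (Fin s))
    (k : Fin s → ℕ) :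
    (Cuk C n u k).rank = prefixRank C (fun j => min (if j ∈ u then k j else 0) n) := by
  rw [rank_eq_finrank_span_row, range_Cuk_row]
  rfl

lemma rank_Cuk_le [Fintype F] (C : Fin s → ℕ → Fin m → F) (n : ℕ) (u : Finset (Fin s))
    (k : Fin s → ℕ) :
    (Cuk C n u k).rank ≤ m :=
  (Cuk C n u k).rank_le_card_width.trans_eq (Fintype.card_fin m)

end RowPrefix

section MinimalDependent
variable {F : Type} [Field F] {s m : ℕ} {C : Fin s → ℕ → Fin m → F}

def IsMinimalDependent (C : Fin s → ℕ → Fin m → F) (κ : Fin s → ℕ) : Prop :=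
  ¬LinearIndepOn F (rowFam C) ↑(prefixIdx κ) ∧
    ∀ κ' ≤ κ, ∑ j, κ' j < ∑ j, κ j → LinearIndepOn F (rowFam C) ↑(prefixIdx κ')

lemma exists_isMinimalDependent_le {κ : Fin s → ℕ}
    (h : ¬LinearIndepOn F (rowFam C) ↑(prefixIdx κ)) : ∃ κ' ≤ κ, IsMinimalDependent C κ' := by
  obtain ⟨κ', ⟨hle, hdep⟩, hmin⟩ := (measure fun κ : Fin s → ℕ => ∑ j, κ j).wf.has_min
    {κ' | κ' ≤ κ ∧ ¬LinearIndepOn F (rowFam C) ↑(prefixIdx κ')} ⟨κ, le_rfl, h⟩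
  refine ⟨κ', hle, hdep, fun κ'' hle' hlt => ?_⟩
  by_contra hdep'
  exact hmin κ'' ⟨hle'.trans hle, hdep'⟩ hlt

variable {κ : Fin s → ℕ}

lemma IsMinimalDependent.linearIndepOn_pred (hκ : IsMinimalDependent C κ) :
    LinearIndepOn F (rowFam C) ↑(prefixIdx fun j => κ j - 1) := by
  obtain ⟨hdep, hmin⟩ := hκ
  obtain ⟨j, hj⟩ := nonempty_prefixIdx_of_not_linearIndepOn hdep
  exact hmin _ (fun _ => Nat.sub_le _ _) (sum_lt_sum (fun _ _ => Nat.sub_le _ _)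
    ⟨j, mem_univ j, by omega⟩)

lemma IsMinimalDependent.coeff_top_ne_zero (hκ : IsMinimalDependent C κ)
    {g : (Σ _ : Fin s, ℕ) → F}
    (hg : ∑ p ∈ prefixIdx κ, g p • rowFam C p = 0) {p₀ : Σ _ : Fin s, ℕ}
    (hp₀ : p₀ ∈ prefixIdx κ) (hgp₀ : g p₀ ≠ 0) {j : Fin s} (hj : 0 < κ j) :
    g ⟨j, κ j - 1⟩ ≠ 0 := by
  classical
  intro hg0
  have hsum : ∑ p ∈ prefixIdx (Function.update κ j (κ j - 1)), g p • rowFam C p = 0 := by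
    rw [← hg, sum_prefixIdx_eq_sum_update_pred_add hj, hg0, zero_smul, add_zero]
  have hp₀' := mem_prefixIdx_update_pred (j := j) hp₀ (by rintro rfl; exact hgp₀ hg0)
  refine not_linearIndepOn_finset_iff.2 ⟨g, hsum, p₀, hp₀', hgp₀⟩
    (hκ.2 _ (update_le_iff.2 ⟨Nat.sub_le _ _, fun _ _ => le_rfl⟩) ?_)
  refine sum_lt_sum (fun i _ => ?_) ⟨j, mem_univ j, by rw [Function.update_self]; omega⟩
  exact (update_le_iff.2 ⟨Nat.sub_le _ _, fun _ _ => le_rfl⟩ : _ ≤ κ) i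

lemma IsMinimalDependent.sum_top_rows_mem_span [Fintype F] (hκ : IsMinimalDependent C κ)
    (h2 : Fintype.card F = 2) :
    ∑ j with 0 < κ j, C j (κ j - 1) ∈ span F (rowFam C '' ↑(prefixIdx fun j => κ j - 1)) := by
  obtain ⟨g, hg, p₀, hp₀, hgp₀⟩ := not_linearIndepOn_finset_iff.1 hκ.1
  have hsplit := sum_prefixIdx_of_le_of_le_add_one (κ' := fun j => κ j - 1)
    (fun _ => Nat.sub_le _ _) (fun j => by omega)
    fun p => g p • rowFam C p
  have htop : ∀ j ∈ univ.filter fun j => κ j - 1 < κ j,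
      g ⟨j, κ j - 1⟩ • rowFam C ⟨j, κ j - 1⟩ = C j (κ j - 1) := fun j hj => by
    rw [(eq_zero_or_eq_one_of_card_eq_two h2 _).resolve_left
      (hκ.coeff_top_ne_zero hg hp₀ hgp₀ (by simp at hj; omega)), one_smul]
    rfl
  rw [sum_congr rfl htop, hg, eq_comm, ← neg_eq_iff_add_eq_zero] at hsplit
  have hfilter : (univ.filter fun j => κ j - 1 < κ j) = univ.filter fun j => 0 < κ j :=
    filter_congr fun j _ => by omega
  rw [← hfilter, ← hsplit]
  exact neg_mem (sum_mem fun p hp => smul_mem _ _ (subset_span (Set.mem_image_of_mem _ hp)))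

lemma nextRowSum_filter_pos_pred {n : ℕ} {κ : Fin s → ℕ} (hκn : ∀ j, κ j ≤ n) :
    nextRowSum C n (univ.filter fun j => 0 < κ j) (fun j => κ j - 1)
      = ∑ j with 0 < κ j, C j (κ j - 1) := by
  refine sum_congr rfl fun j hj => if_pos ?_
  have := hκn j
  simp only [mem_filter, mem_univ, true_and] at hj
  show κ j - 1 < n
  omega

lemma add_le_sum_of_linearIndepOn_min {n : ℕ} {k : Fin s → ℕ} (hk : ∀ j, 1 ≤ k j)
    (hrk : prefixRank C (fun j => min (k j) n) ≠ ∑ j, k j)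
    (hind : LinearIndepOn F (rowFam C) ↑(prefixIdx fun j => min (k j) n)) :
    n + s ≤ ∑ j, k j := by
  obtain ⟨j₁, hj₁⟩ : ∃ j, n < k j := by
    by_contra! h
    rw [(linearIndepOn_prefixIdx_iff C _).1 hind] at hrk
    exact hrk (sum_congr rfl fun j _ => min_eq_left (h j))
  calc n + s = ∑ j, ((if j = j₁ then n else 0) + 1) := by simp [sum_add_distrib]
    _ ≤ ∑ j, k j := sum_le_sum fun j _ => by
      have := hk j
      split_ifs with h
      · subst h; omega
      · omega

lemma not_linearIndepOn_prefixIdx_plusOne {κ : Fin s → ℕ} {u : Finset (Fin s)} (hu : u.Nonempty)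
    (h : ∑ j ∈ u, C j (κ j) ∈ span F (rowFam C '' ↑(prefixIdx κ))) :
    ¬LinearIndepOn F (rowFam C) ↑(prefixIdx (plusOne κ u)) := by
  classical
  obtain ⟨j₀, hj₀⟩ := hu
  set S : Set (Σ _ : Fin s, ℕ) := ↑(prefixIdx (plusOne κ u)) \ {⟨j₀, κ j₀⟩}
  have hsub : span F (rowFam C '' ↑(prefixIdx κ)) ≤ span F (rowFam C '' S) := by
    refine span_mono (Set.image_mono fun p hp => ⟨?_, ?_⟩)
    · have hp' := mem_prefixIdx.1 hp
      simp only [mem_coe, mem_prefixIdx, plusOne]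
      split_ifs <;> omega
    · rintro rfl
      simp at hp
  have hrest : ∀ j ∈ u.erase j₀, C j (κ j) ∈ span F (rowFam C '' S) := fun j hj => by
    refine subset_span ⟨⟨j, κ j⟩, ⟨?_, fun h => (mem_erase.1 hj).1 (congrArg Sigma.fst h)⟩, rfl⟩
    simp [plusOne, (mem_erase.1 hj).2]
  rw [← add_sum_erase u _ hj₀] at h
  rw [linearIndepOn_iff_notMem_span]
  push Not
  refine ⟨⟨j₀, κ j₀⟩, by simp [plusOne, hj₀], ?_⟩
  simpa [rowFam] using sub_mem (hsub h) (sum_mem hrest)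

end MinimalDependent

section Deficiency
variable {F : Type} [Field F] [Fintype F] {s m : ℕ} {C : Fin s → ℕ → Fin m → F}

def deficientSizes (C : Fin s → ℕ → Fin m → F) (n : ℕ) : Set ℕ :=
  {r | ∃ k : Fin s → ℕ, (∀ j ∈ univ, 1 ≤ k j) ∧
    (Cuk C n univ k).rank ≠ ∑ j ∈ univ, k j ∧ r = ∑ j ∈ univ, k j}

lemma rank_Cuk_univ (n : ℕ) (k : Fin s → ℕ) :
    (Cuk C n univ k).rank = prefixRank C (fun j => min (k j) n) := by
  simp [rank_Cuk]

lemma sum_mem_deficientSizes {n : ℕ} {k : Fin s → ℕ} (hk : ∀ j, 1 ≤ k j)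
    (hrk : (Cuk C n univ k).rank ≠ ∑ j, k j) : ∑ j, k j ∈ deficientSizes C n :=
  ⟨k, fun j _ => hk j, hrk, rfl⟩

lemma width_add_mem_deficientSizes (n : ℕ) (hs : 0 < s) : m + s ∈ deficientSizes C n := by
  have hsum : ∑ j : Fin s, (1 + if j = ⟨0, hs⟩ then m else 0) = m + s := by
    simp [sum_add_distrib, add_comm]
  refine ⟨_, fun j _ => Nat.le_add_right 1 _, ?_, hsum.symm⟩
  rw [hsum]
  exact ((rank_Cuk_le C n univ _).trans_lt (by omega)).ne

lemma sInf_deficientSizes_le_sum_max {n : ℕ} {κ : Fin s → ℕ} (hκn : ∀ j, κ j ≤ n)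
    (hdep : ¬LinearIndepOn F (rowFam C) ↑(prefixIdx κ)) :
    sInf (deficientSizes C n) ≤ ∑ j, max (κ j) 1 := by
  obtain ⟨j, hj⟩ := nonempty_prefixIdx_of_not_linearIndepOn hdep
  have hκ'n : ∀ i, max (κ i) 1 ≤ n := fun i => max_le (hκn i) (by have := hκn j; omega)
  have hdep' : ¬LinearIndepOn F (rowFam C) ↑(prefixIdx fun i => max (κ i) 1) := fun h =>
    hdep (h.mono (coe_subset.2 (prefixIdx_mono fun i => le_max_left _ _)))
  refine Nat.sInf_le (sum_mem_deficientSizes (fun i => le_max_right _ _) ?_)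
  rw [rank_Cuk_univ]
  simp only [min_eq_left (hκ'n _)]
  rwa [Ne, ← linearIndepOn_prefixIdx_iff]

lemma sInf_deficientSizes_le_prefixRank_pred_add {n : ℕ} {κ : Fin s → ℕ} (hκn : ∀ j, κ j ≤ n)
    (hdep : ¬LinearIndepOn F (rowFam C) ↑(prefixIdx κ)) :
    sInf (deficientSizes C n) ≤ prefixRank C (fun j => κ j - 1) + s := by
  obtain ⟨κ', hle, hκ'⟩ := exists_isMinimalDependent_le hdep
  calc sInf (deficientSizes C n) ≤ ∑ j, max (κ' j) 1 :=
        sInf_deficientSizes_le_sum_max (fun j => (hle j).trans (hκn j)) hκ'.1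
    _ = ∑ j, (κ' j - 1) + s := by
        rw [sum_congr rfl fun j _ => show max (κ' j) 1 = (κ' j - 1) + 1 by omega,
          sum_add_distrib]
        simp
    _ = prefixRank C (fun j => κ' j - 1) + s := by
        rw [(linearIndepOn_prefixIdx_iff C _).1 hκ'.linearIndepOn_pred]
    _ ≤ prefixRank C (fun j => κ j - 1) + s :=
        Nat.add_le_add_right (prefixRank_mono C fun j => Nat.sub_le_sub_right (hle j) 1) s

theorem sInf_deficientSizes_le_rank_add {n : ℕ} {u : Finset (Fin s)} {k : Fin s → ℕ}
    (hmn : m ≤ n) (hu : u.Nonempty)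
    (hE : nextRowSum C n u k ∈ span F (Set.range (Cuk C n u k).row)) :
    sInf (deficientSizes C n) ≤ (Cuk C n u k).rank + s := by
  rw [range_Cuk_row] at hE
  rw [rank_Cuk]
  set t : Fin s → ℕ := fun j => min (if j ∈ u then k j else 0) n with ht
  have htn : ∀ j, t j ≤ n := fun j => min_le_right _ _
  by_cases hind : LinearIndepOn F (rowFam C) ↑(prefixIdx t)
  swap
  · exact (sInf_deficientSizes_le_prefixRank_pred_add htn hind).trans
      (Nat.add_le_add_right (prefixRank_mono C fun j => Nat.sub_le _ _) s)
  rw [linearIndepOn_prefixIdx_iff] at hind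
  by_cases hρ : m ≤ prefixRank C t
  · have hs : 0 < s := (hu.card_pos.trans_le (card_le_univ u)).trans_eq (Fintype.card_fin s)
    exact (Nat.sInf_le (width_add_mem_deficientSizes n hs)).trans (by omega)
  have htlt : ∀ j, t j < n := fun j =>
    (single_le_sum (fun i _ => Nat.zero_le (t i)) (mem_univ j)).trans_lt (by omega)
  have hkt : ∀ j ∈ u, t j = k j ∧ k j < n := fun j hj => by
    have := htlt j
    simp only [ht, if_pos hj] at this ⊢
    omega
  -- Now `t = k` on `u`, and the new rows `C j (k j)` add up into the span of `t`,
  -- so the prefix `t + 1_u` is dependent.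
  have hE' : ∑ j ∈ u, C j (t j) ∈ span F (rowFam C '' ↑(prefixIdx t)) := by
    convert hE using 1
    exact sum_congr rfl fun j hj => by rw [if_pos (hkt j hj).2, (hkt j hj).1]
  have hpn : ∀ j, plusOne t u j ≤ n := fun j => by
    have := htlt j
    unfold plusOne
    split_ifs <;> omega
  refine (sInf_deficientSizes_le_prefixRank_pred_add hpn
    (not_linearIndepOn_prefixIdx_plusOne hu hE')).trans
    (Nat.add_le_add_right (prefixRank_mono C fun j => ?_) s)
  show plusOne t u j - 1 ≤ t j
  unfold plusOne
  split_ifs <;> omega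

lemma min_ite_mem_filter_pos_pred {n : ℕ} {κ : Fin s → ℕ} (hκn : ∀ j, κ j ≤ n) :
    (fun j => min (if j ∈ univ.filter (fun j => 0 < κ j) then κ j - 1 else 0) n)
      = fun j => κ j - 1 := funext fun j => by
  have := hκn j
  simp only [mem_filter, mem_univ, true_and]
  split_ifs <;> omega

theorem exists_rank_add_le_sInf_deficientSizes (h2 : Fintype.card F = 2) (hs : 0 < s) {n : ℕ}
    (hmn : m ≤ n) :
    ∃ (u : Finset (Fin s)) (k : Fin s → ℕ), u.Nonempty ∧
      nextRowSum C n u k ∈ span F (Set.range (Cuk C n u k).row) ∧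
      (Cuk C n u k).rank + s ≤ sInf (deficientSizes C n) := by
  obtain ⟨k₀, hk₀, hrk, hσ⟩ := Nat.sInf_mem ⟨_, width_add_mem_deficientSizes (C := C) n hs⟩
  replace hk₀ : ∀ j, 1 ≤ k₀ j := fun j => hk₀ j (mem_univ j)
  rw [hσ]
  rw [rank_Cuk_univ] at hrk
  by_cases hind : LinearIndepOn F (rowFam C) ↑(prefixIdx fun j => min (k₀ j) n)
  · refine ⟨univ, fun _ => n, univ_nonempty_iff.2 ⟨⟨0, hs⟩⟩, by simp [nextRowSum, zero_mem], ?_⟩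
    have := add_le_sum_of_linearIndepOn_min hk₀ hrk hind
    have := rank_Cuk_le C n univ fun _ => n
    omega
  obtain ⟨κ, hle, hκ⟩ := exists_isMinimalDependent_le hind
  have hκn : ∀ j, κ j ≤ min (k₀ j) n := hle
  have hκn' : ∀ j, κ j ≤ n := fun j => (hκn j).trans (min_le_right _ _)
  refine ⟨univ.filter fun j => 0 < κ j, fun j => κ j - 1, ?_, ?_, ?_⟩
  · obtain ⟨j, hj⟩ := nonempty_prefixIdx_of_not_linearIndepOn hκ.1
    exact ⟨j, by simpa using hj⟩
  · rw [range_Cuk_row, min_ite_mem_filter_pos_pred hκn', nextRowSum_filter_pos_pred hκn']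
    exact hκ.sum_top_rows_mem_span h2
  · rw [rank_Cuk, min_ite_mem_filter_pos_pred hκn']
    calc prefixRank C (fun j => κ j - 1) + s ≤ ∑ j, (κ j - 1) + s :=
          Nat.add_le_add_right (prefixRank_le_sum C _) s
      _ = ∑ j, (κ j - 1 + 1) := by simp [sum_add_distrib]
      _ ≤ ∑ j, k₀ j := sum_le_sum fun j _ => by
          have := hκn j
          have := hk₀ j
          omega

end Deficiency

theorem stmt19_general {F : Type} [Field F] [Fintype F] {s m : ℕ} (hs : 0 < s)
    (h2 : Fintype.card F = 2)
    (φ : Fin (Fintype.card F) ≃ F)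
    (C : Fin s → ℕ → Fin m → F) (n : ℕ) (hn : m ≤ n) :
    IsGreatest
      {γ : ℝ | ∃ (u : Finset (Fin s)) (k : Fin s → ℕ), u.Nonempty ∧
        γ = gain (Fintype.card F) (Fintype.card F ^ m)
              (fun i j => dnet φ C n (i : ℕ) j) u k}
      ((2 : ℝ) ^ (tstar C n Finset.univ + (s : ℤ) - 1)) := by
  have htstar : tstar C n univ = (m : ℤ) + 1 - sInf (deficientSizes C n) := rfl
  have hpow : ∀ u k, (2 : ℝ) ^ (m - (Cuk C n u k).rank) = 2 ^ ((m : ℤ) - (Cuk C n u k).rank) :=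
    fun u k => by
      rw [← zpow_natCast, Nat.cast_sub (rank_Cuk_le C n u k)]
  constructor
  · obtain ⟨u, k, hu, hE, hle⟩ := exists_rank_add_le_sInf_deficientSizes (C := C) h2 hs hn
    have hge := sInf_deficientSizes_le_rank_add hn hu hE
    refine ⟨u, k, hu, ?_⟩
    rw [gain_dnet h2, if_pos hE, hpow, htstar]
    congr 1
    omega
  · rintro γ ⟨u, k, hu, rfl⟩
    rw [gain_dnet h2]
    split_ifs with hE
    · have := sInf_deficientSizes_le_rank_add hn hu hE
      rw [hpow, htstar]
      exact zpow_le_zpow_right₀ one_le_two (by omega)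
    · positivity

/-- in base `2`, if `C_{1:s,1}` has full row rank, then the maximal gain
coefficient is `Γ = 2^{t*_{1:s}+s-1}`. -/
theorem stmt19 {F : Type} [Field F] [Fintype F] {s m : ℕ} (hs : 0 < s)
    (h2 : Fintype.card F = 2)
    (φ : Fin (Fintype.card F) ≃ F) (hφ : φ ⟨0, Fintype.card_pos⟩ = 0)
    (C : Fin s → ℕ → Fin m → F) (n : ℕ) (hn : m ≤ n)
    (hfull : (Cuk C n Finset.univ (fun _ => 1)).rank = s) :
    IsGreatest
      {γ : ℝ | ∃ (u : Finset (Fin s)) (k : Fin s → ℕ), u.Nonempty ∧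
        γ = gain (Fintype.card F) (Fintype.card F ^ m)
              (fun i j => dnet φ C n (i : ℕ) j) u k}
      ((2 : ℝ) ^ (tstar C n Finset.univ + (s : ℤ) - 1)) :=
  stmt19_general hs h2 φ C n hn
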